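/- arXiv:1702.03447 — 4 statements merged into one kernel-verified Lean document; each statement's English description precedes it below -/
import Mathlib

section
/- Let U be a finite set, R a finite collection of subsets of U, and n a natural number. For a subcollection M ⊆ R define F(M) = (2n+1)·(|U| − |⋃_{S∈M} S|) + 2·|M|. Then there exists a subcollection M ⊆ R with F(M) ≤ 2n if and only if there exists a subcollection M' ⊆ R with |M'| ≤ n and ⋃_{S∈M'} S = U. (This is the combinatorial core of the reduction from SET COVER proving that the mapping selection problem for full st tgds is NP-hard.) -/
/-! Each uncovered element costs `2n + 1`, more than the whole budget `2n`, so `F M ≤ 2n` forces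
`M` to cover `U`; once `U` is covered, `F M = 2|M|`, and `2|M| ≤ 2n` is `|M| ≤ n`. -/

theorem Nat.mul_add_two_mul_le_two_mul_iff (n d m : ℕ) :
    (2 * n + 1) * d + 2 * m ≤ 2 * n ↔ d = 0 ∧ m ≤ n := by
  rcases d with _ | d
  · omega
  · constructor
    · intro h
      nlinarith
    · omega

theorem stmt_0 {α : Type*} [DecidableEq α] (U : Finset α) (R : Finset (Finset α))
    (hR : ∀ S ∈ R, S ⊆ U) (n : ℕ)
    (F : Finset (Finset α) → ℕ)
    (hF : ∀ M, F M = (2 * n + 1) * (U.card - (M.biUnion id).card) + 2 * M.card) :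
    (∃ M ⊆ R, F M ≤ 2 * n) ↔ (∃ M' ⊆ R, M'.card ≤ n ∧ M'.biUnion id = U) := by
  have hF_le_iff : ∀ M ⊆ R, F M ≤ 2 * n ↔ M.card ≤ n ∧ M.biUnion id = U := fun M hM => by
    have hcover : M.biUnion id ⊆ U := Finset.biUnion_subset.2 fun S hS => hR S (hM hS)
    rw [hF, Nat.mul_add_two_mul_le_two_mul_iff, Nat.sub_eq_zero_iff_le,
      Finset.eq_iff_card_le_of_subset hcover, and_comm]
  constructor
  · rintro ⟨M, hM, hle⟩
    exact ⟨M, hM, (hF_le_iff M hM).1 hle⟩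
  · rintro ⟨M, hM, hcover⟩
    exact ⟨M, hM, (hF_le_iff M hM).2 hcover⟩
end

section
/- Let U be a finite set, R a finite collection of subsets of U, and n a natural number. For a subcollection M ⊆ R define F(M) = (2n+1)·(|U| − |⋃_{S∈M} S|) + 2·|M|. Suppose there exists a subcollection M' ⊆ R with |M'| ≤ n and ⋃_{S∈M'} S = U. Then every subcollection M ⊆ R that minimizes F over all subcollections of R satisfies ⋃_{S∈M} S = U and has minimum cardinality among all covering subcollections, i.e., |M| ≤ |M''| for every M'' ⊆ R with ⋃_{S∈M''} S = U. -/
/-!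
Covering all of `U` with at most `n` sets costs at most `2n`, while leaving even one element of
`U` uncovered already costs `2n + 1`. So a minimizer of the objective covers `U`, and on covers the
objective is `2 · |M|`, whence a minimizer is a minimum cover.
-/

namespace SetCoverReduction

variable {α : Type*} [DecidableEq α]

def coverObjective (U : Finset α) (n : ℕ) (M : Finset (Finset α)) : ℕ :=
  (2 * n + 1) * (U.card - (M.biUnion id).card) + 2 * M.card

theorem coverObjective_of_biUnion_eq {U : Finset α} {M : Finset (Finset α)} (n : ℕ)
    (hM : M.biUnion id = U) : coverObjective U n M = 2 * M.card := by
  simp [coverObjective, hM]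

theorem biUnion_eq_of_coverObjective_le {U : Finset α} {M : Finset (Finset α)} {n : ℕ}
    (hMU : M.biUnion id ⊆ U) (hle : coverObjective U n M ≤ 2 * n) : M.biUnion id = U := by
  refine Finset.eq_of_subset_of_card_le hMU (Nat.le_of_sub_eq_zero ?_)
  by_contra hpos
  have : 2 * n + 1 ≤ (2 * n + 1) * (U.card - (M.biUnion id).card) :=
    Nat.le_mul_of_pos_right _ (Nat.pos_of_ne_zero hpos)
  unfold coverObjective at hle
  omega

end SetCoverReduction

open SetCoverReduction in
theorem stmt_4 {α : Type*} [DecidableEq α] (U : Finset α) (R : Finset (Finset α))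
    (hR : ∀ S ∈ R, S ⊆ U) (n : ℕ)
    (F : Finset (Finset α) → ℕ)
    (hF : ∀ M, F M = (2 * n + 1) * (U.card - (M.biUnion id).card) + 2 * M.card)
    (hex : ∃ M' ⊆ R, M'.card ≤ n ∧ M'.biUnion id = U) :
    ∀ M ⊆ R, (∀ M'' ⊆ R, F M ≤ F M'') →
      M.biUnion id = U ∧ ∀ M'' ⊆ R, M''.biUnion id = U → M.card ≤ M''.card := by
  obtain rfl : F = coverObjective U n := funext hF
  intro M hMR hmin
  obtain ⟨M', hM'R, hM'card, hM'cov⟩ := hex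
  have hle : coverObjective U n M ≤ 2 * n :=
    calc coverObjective U n M ≤ coverObjective U n M' := hmin M' hM'R
      _ = 2 * M'.card := coverObjective_of_biUnion_eq n hM'cov
      _ ≤ 2 * n := by omega
  have hcov : M.biUnion id = U :=
    biUnion_eq_of_coverObjective_le (Finset.biUnion_subset.mpr fun S hS => hR S (hMR hS)) hle
  refine ⟨hcov, fun M'' hM''R hM''cov => ?_⟩
  have := hmin M'' hM''R
  rw [coverObjective_of_biUnion_eq n hcov, coverObjective_of_biUnion_eq n hM''cov] at this
  omega
end

section
/- Let U be a finite set, R a finite collection of subsets of U, n a natural number, and let w1, w3, s be positive integers (w1 a weight on unexplained tuples, w3 a weight on mapping size, and s the common size of each candidate tgd). Set m = s · w3 · n, and for a subcollection M ⊆ R define F_w(M) = w1 · (m+1) · (|U| − |⋃_{S∈M} S|) + w3 · s · |M|. Then for every subcollection M ⊆ R, F_w(M) ≤ m holds if and only if ⋃_{S∈M} S = U and |M| ≤ n. -/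
/-!
The coverage term carries the factor `w1 * (m + 1) > m`, so `F_w(M) ≤ m` forces every element of
`U` to be covered; what remains is `w3 * s * |M| ≤ s * w3 * n`, i.e. `|M| ≤ n`.
-/

theorem Nat.mul_succ_mul_add_le_iff {a m d c : ℕ} (ha : 0 < a) :
    a * (m + 1) * d + c ≤ m ↔ d = 0 ∧ c ≤ m := by
  constructor
  · intro h
    have hd : d = 0 := by
      by_contra hd
      have : m + 1 ≤ a * (m + 1) * d :=
        calc m + 1 ≤ a * (m + 1) := Nat.le_mul_of_pos_left _ ha
          _ ≤ a * (m + 1) * d := Nat.le_mul_of_pos_right _ (Nat.pos_of_ne_zero hd)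
      omega
    subst hd
    simpa using h
  · rintro ⟨rfl, hc⟩
    simpa using hc

theorem Finset.card_sub_card_eq_zero_iff {α : Type*} {T U : Finset α} (h : T ⊆ U) :
    U.card - T.card = 0 ↔ T = U := by
  rw [Nat.sub_eq_zero_iff_le]
  exact ⟨Finset.eq_of_subset_of_card_le h, fun hTU => hTU ▸ le_rfl⟩

theorem stmt_6 {α : Type*} [DecidableEq α] (U : Finset α) (R : Finset (Finset α))
    (hR : ∀ S ∈ R, S ⊆ U) (n : ℕ) (w1 w3 s : ℕ) (hw1 : 0 < w1) (hw3 : 0 < w3)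
    (hs : 0 < s) (m : ℕ) (hm : m = s * w3 * n)
    (Fw : Finset (Finset α) → ℕ)
    (hFw : ∀ M, Fw M = w1 * (m + 1) * (U.card - (M.biUnion id).card) + w3 * s * M.card) :
    ∀ M ⊆ R, (Fw M ≤ m ↔ M.biUnion id = U ∧ M.card ≤ n) := by
  intro M hM
  have hcover : M.biUnion id ⊆ U := Finset.biUnion_subset.2 fun S hS => hR S (hM hS)
  rw [hFw, Nat.mul_succ_mul_add_le_iff hw1, Finset.card_sub_card_eq_zero_iff hcover, hm,
    mul_comm s w3, Nat.mul_le_mul_left_iff (Nat.mul_pos hw3 hs)]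
end

section
/- Let U be a finite set, R a finite collection of subsets of U, n a natural number, and let w1, w3, s be positive integers. Set m = s · w3 · n, and for a subcollection M ⊆ R define F_w(M) = w1 · (m+1) · (|U| − |⋃_{S∈M} S|) + w3 · s · |M|. Suppose there exists a subcollection M' ⊆ R with |M'| ≤ n and ⋃_{S∈M'} S = U. Then every subcollection M ⊆ R that minimizes F_w over all subcollections of R satisfies ⋃_{S∈M} S = U and |M| ≤ |M''| for every M'' ⊆ R with ⋃_{S∈M''} S = U; that is, exact minimizers of the weighted objective are minimum-cardinality set covers. -/
/-!
Uncovering even one element of `U` costs at least `w1 * (m + 1) > m`, while a cover of size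
at most `n` costs at most `w3 * s * n = m`; so a minimizer is a cover. Among covers the
objective is `w3 * s * |M|`, a positive multiple of the cardinality.
-/

namespace Finset

variable {α : Type*} [DecidableEq α]

def coverObjective (U : Finset α) (P c : ℕ) (M : Finset (Finset α)) : ℕ :=
  P * (U.card - (M.biUnion id).card) + c * M.card

variable {U : Finset α} {P c : ℕ} {M : Finset (Finset α)}

theorem coverObjective_of_biUnion_eq (h : M.biUnion id = U) :
    coverObjective U P c M = c * M.card := by
  simp [coverObjective, h]

theorem le_coverObjective_of_ssubset (h : M.biUnion id ⊂ U) :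
    P ≤ coverObjective U P c M := by
  have : 1 ≤ U.card - (M.biUnion id).card := Nat.sub_pos_of_lt (card_lt_card h)
  calc P ≤ P * (U.card - (M.biUnion id).card) := Nat.le_mul_of_pos_right P this
    _ ≤ coverObjective U P c M := Nat.le_add_right _ _

variable {R : Finset (Finset α)}

theorem biUnion_eq_of_coverObjective_le {M' : Finset (Finset α)} (hR : ∀ S ∈ R, S ⊆ U)
    (hM : M ⊆ R) (hmin : coverObjective U P c M ≤ coverObjective U P c M')
    (hM' : M'.biUnion id = U) (hcheap : c * M'.card < P) :
    M.biUnion id = U := by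
  by_contra hne
  have hsub : M.biUnion id ⊆ U := biUnion_subset.2 fun S hS => hR S (hM hS)
  have := le_coverObjective_of_ssubset (P := P) (c := c) (ssubset_of_subset_of_ne hsub hne)
  rw [coverObjective_of_biUnion_eq hM'] at hmin
  omega

theorem card_le_of_coverObjective_le {M'' : Finset (Finset α)} (hc : 0 < c)
    (hM : M.biUnion id = U) (hM'' : M''.biUnion id = U)
    (hmin : coverObjective U P c M ≤ coverObjective U P c M'') :
    M.card ≤ M''.card := by
  rw [coverObjective_of_biUnion_eq hM, coverObjective_of_biUnion_eq hM''] at hmin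
  exact Nat.le_of_mul_le_mul_left hmin hc

end Finset

theorem stmt_9 {α : Type*} [DecidableEq α] (U : Finset α) (R : Finset (Finset α))
    (hR : ∀ S ∈ R, S ⊆ U) (n : ℕ) (w1 w3 s : ℕ) (hw1 : 0 < w1) (hw3 : 0 < w3)
    (hs : 0 < s) (m : ℕ) (hm : m = s * w3 * n)
    (Fw : Finset (Finset α) → ℕ)
    (hFw : ∀ M, Fw M = w1 * (m + 1) * (U.card - (M.biUnion id).card) + w3 * s * M.card)
    (hex : ∃ M' ⊆ R, M'.card ≤ n ∧ M'.biUnion id = U) :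
    ∀ M ⊆ R, (∀ M'' ⊆ R, Fw M ≤ Fw M'') →
      M.biUnion id = U ∧ ∀ M'' ⊆ R, M''.biUnion id = U → M.card ≤ M''.card := by
  have hFw' : Fw = U.coverObjective (w1 * (m + 1)) (w3 * s) := funext hFw
  subst hFw'
  intro M hM hmin
  obtain ⟨M', hM'R, hM'n, hM'⟩ := hex
  have hcheap : w3 * s * M'.card < w1 * (m + 1) :=
    calc w3 * s * M'.card ≤ m := by rw [hm, mul_comm s]; exact Nat.mul_le_mul_left _ hM'n
      _ < m + 1 := m.lt_succ_self
      _ ≤ w1 * (m + 1) := Nat.le_mul_of_pos_left _ hw1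
  have hcov := Finset.biUnion_eq_of_coverObjective_le hR hM (hmin M' hM'R) hM' hcheap
  exact ⟨hcov, fun M'' hM''R hM'' =>
    Finset.card_le_of_coverObjective_le (Nat.mul_pos hw3 hs) hcov hM'' (hmin M'' hM''R)⟩
end
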